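/- For every session type T, the parallel composition of the usage-type encoding of T with the usage-type encoding of its dual is reliable: rel(⟦T⟧_su | ⟦T̄⟧_su) holds. -/

import Mathlib

namespace Paper

abbrev Name := ℕ
abbrev Label := ℕ

/-! ## Session π-calculus: syntax -/

inductive SProc : Type where
  | nil : SProc
  | output : Name → Name → SProc → SProc
  | input : Name → Name → SProc → SProc
  | select : Name → Label → SProc → SProc
  | branch : Name → Finset Label → (Label → SProc) → SProc
  | par : SProc → SProc → SProc
  | res : Name → Name → SProc → SProc

namespace SProc

/-- Free names. -/
def fn : SProc → Set Name
  | nil => ∅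
  | output x v P => {x, v} ∪ P.fn
  | input x y P => {x} ∪ (P.fn \ {y})
  | select x _ P => {x} ∪ P.fn
  | branch x I Ps => {x} ∪ ⋃ i ∈ I, (Ps i).fn
  | par P Q => P.fn ∪ Q.fn
  | res x y P => P.fn \ {x, y}

/-- Renaming of a single name. -/
def rn (v z a : Name) : Name := if a = z then v else a

/-- Substitution `P[v/z]` of the name `v` for the name `z`. -/
def subst (v z : Name) : SProc → SProc
  | nil => nil
  | output x w P => output (rn v z x) (rn v z w) (P.subst v z)
  | input x y P => input (rn v z x) y (if y = z then P else P.subst v z)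
  | select x l P => select (rn v z x) l (P.subst v z)
  | branch x I Ps => branch (rn v z x) I (fun i => (Ps i).subst v z)
  | par P Q => par (P.subst v z) (Q.subst v z)
  | res a b P => res a b (if z = a ∨ z = b then P else P.subst v z)

end SProc

/-- Structural congruence for the session π-calculus. -/
inductive SC : SProc → SProc → Prop where
  | refl (P) : SC P P
  | symm : SC P Q → SC Q P
  | trans : SC P Q → SC Q R → SC P R
  | parComm (P Q) : SC (.par P Q) (.par Q P)
  | parAssoc (P Q R) : SC (.par (.par P Q) R) (.par P (.par Q R))
  | parNil (P) : SC (.par P .nil) P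
  | resPar (x y : Name) (P Q) : x ∉ Q.fn → y ∉ Q.fn →
      SC (.par (.res x y P) Q) (.res x y (.par P Q))
  | resNil (x y) : SC (.res x y .nil) .nil
  | resComm (x y a b P) : SC (.res x y (.res a b P)) (.res a b (.res x y P))
  | parCong : SC P P' → SC Q Q' → SC (.par P Q) (.par P' Q')
  | resCong (x y) : SC P Q → SC (.res x y P) (.res x y Q)

/-- Reduction for the session π-calculus. -/
inductive SRed : SProc → SProc → Prop where
  | com (x y v z : Name) (P Q) :
      SRed (.res x y (.par (.output x v P) (.input y z Q)))
           (.res x y (.par P (Q.subst v z)))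
  | case (x y : Name) (j : Label) (I : Finset Label) (P) (Ps : Label → SProc) :
      j ∈ I →
      SRed (.res x y (.par (.select x j P) (.branch y I Ps)))
           (.res x y (.par P (Ps j)))
  | par : SRed P Q → SRed (.par P R) (.par Q R)
  | res (x y) : SRed P Q → SRed (.res x y P) (.res x y Q)
  | str : SC P P' → SRed P' Q' → SC Q' Q → SRed P Q

/-! ## Session types -/

inductive SType : Type where
  | endT : SType
  | recv : SType → SType → SType        -- ?T.S
  | send : SType → SType → SType        -- !T.S
  | branchT : Finset Label → (Label → SType) → SType   -- &{l_i : S_i}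
  | selectT : Finset Label → (Label → SType) → SType   -- ⊕{l_i : S_i}

/-- Session type duality. -/
def SType.dual : SType → SType
  | .endT => .endT
  | .recv T S => .send T S.dual
  | .send T S => .recv T S.dual
  | .branchT I S => .selectT I (fun i => (S i).dual)
  | .selectT I S => .branchT I (fun i => (S i).dual)

/-- Session typing contexts. -/
abbrev Ctx := Name → Option SType

def Ctx.update (Γ : Ctx) (x : Name) (T : Option SType) : Ctx :=
  fun y => if y = x then T else Γ y

/-- The context splitting operation Γ = Γ₁ ∘ Γ₂: every assignment goes to exactly one side. -/
def Ctx.split (Γ Γ₁ Γ₂ : Ctx) : Prop :=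
  ∀ x, (Γ₁ x = Γ x ∧ Γ₂ x = none) ∨ (Γ₂ x = Γ x ∧ Γ₁ x = none)

/-- A context in which every declared channel has the terminated type `end`. -/
def Ctx.terminated (Γ : Ctx) : Prop := ∀ x T, Γ x = some T → T = SType.endT

/-- Vasconcelos' session typing judgement Γ ⊢_ST P. -/
inductive STyped : Ctx → SProc → Prop where
  | nil : Ctx.terminated Γ → STyped Γ .nil
  | par : Ctx.split Γ Γ₁ Γ₂ → STyped Γ₁ P → STyped Γ₂ Q → STyped Γ (.par P Q)
  | res (x y : Name) (T : SType) : Γ x = none → Γ y = none → x ≠ y →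
      STyped ((Γ.update x (some T)).update y (some T.dual)) P →
      STyped Γ (.res x y P)
  | input (x y : Name) (T S : SType) :
      Γ x = some (.recv T S) → y ≠ x → Γ y = none →
      STyped ((Γ.update x (some S)).update y (some T)) P →
      STyped Γ (.input x y P)
  | output (x v : Name) (T S : SType) :
      Γ x = some (.send T S) → v ≠ x → Γ v = some T →
      STyped ((Γ.update x (some S)).update v none) P →
      STyped Γ (.output x v P)
  | select (x : Name) (j : Label) (I : Finset Label) (S : Label → SType) :
      Γ x = some (.selectT I S) → j ∈ I →
      STyped (Γ.update x (some (S j))) P →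
      STyped Γ (.select x j P)
  | branch (x : Name) (I : Finset Label) (S : Label → SType) (Ps : Label → SProc) :
      Γ x = some (.branchT I S) →
      (∀ i ∈ I, STyped (Γ.update x (some (S i))) (Ps i)) →
      STyped Γ (.branch x I Ps)

/-! ## Well-formedness -/

/-- A sequence of double restrictions (ν x̃ỹ). -/
def resSeq : List (Name × Name) → SProc → SProc
  | [], P => P
  | (x, y) :: L, P => .res x y (resSeq L P)

inductive PrefixKind : Type where
  | inp | out | sel | bra

/-- The subject and kind of the topmost prefix of a process, if any. -/
def SProc.prefixKind : SProc → Option (Name × PrefixKind)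
  | .output x _ _ => some (x, .out)
  | .input x _ _ => some (x, .inp)
  | .select x _ _ => some (x, .sel)
  | .branch x _ _ => some (x, .bra)
  | _ => none

/-- Well-formedness for session processes (Definition of well-formed processes). -/
def WellFormed (Rp : SProc) : Prop :=
  ∀ (L : List (Name × Name)) (P Q : SProc), SC Rp (resSeq L (.par P Q)) →
    (∀ x kP kQ, P.prefixKind = some (x, kP) → Q.prefixKind = some (x, kQ) → kP = kQ) ∧
    (∀ x y kP kQ, (x, y) ∈ L →
      P.prefixKind = some (x, kP) → Q.prefixKind = some (y, kQ) →
      ∃ R', SRed (.par P Q) R')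

end Paper

namespace Paper

/-! ## Standard π-calculus with variant values -/

inductive Val : Type where
  | ch : Name → Val
  | variant : Label → Val → Val

def Val.fv : Val → Set Name
  | .ch x => {x}
  | .variant _ v => v.fv

/-- Substitution on values. -/
def Val.vsubst (v : Val) (z : Name) : Val → Val
  | .ch x => if x = z then v else .ch x
  | .variant l w => .variant l (Val.vsubst v z w)

/-- Substituting a value in subject (channel) position. -/
def Val.asSubject (v : Val) (z x : Name) : Name :=
  if x = z then (match v with | .ch a => a | _ => x) else x

inductive PProc : Type where
  | nil : PProc
  | output : Name → List Val → PProc → PProc       -- x̄⟨ṽ⟩.P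
  | input : Name → List Name → PProc → PProc       -- x(z̃).P
  | par : PProc → PProc → PProc
  | res : Name → PProc → PProc
  | pcase : Val → Finset Label → (Label → Name) → (Label → PProc) → PProc
      -- case v of {l_i(x_i) ▷ P_i}

namespace PProc

def fn : PProc → Set Name
  | nil => ∅
  | output x vs P => {x} ∪ (⋃ v ∈ vs, Val.fv v) ∪ P.fn
  | input x zs P => {x} ∪ (P.fn \ {a | a ∈ zs})
  | par P Q => P.fn ∪ Q.fn
  | res x P => P.fn \ {x}
  | pcase v I xs Ps => v.fv ∪ ⋃ i ∈ I, ((Ps i).fn \ {xs i})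

/-- Substitution `P[v/z]` of a value for a name. -/
def psubst (v : Val) (z : Name) : PProc → PProc
  | nil => nil
  | output x vs P => output (v.asSubject z x) (vs.map (Val.vsubst v z)) (P.psubst v z)
  | input x zs P => input (v.asSubject z x) zs (if z ∈ zs then P else P.psubst v z)
  | par P Q => par (P.psubst v z) (Q.psubst v z)
  | res a P => res a (if a = z then P else P.psubst v z)
  | pcase w I xs Ps =>
      pcase (Val.vsubst v z w) I xs (fun i => if xs i = z then Ps i else (Ps i).psubst v z)

/-- Simultaneous (here: iterated) substitution `P[ṽ/z̃]`. -/
def psubstList (zs : List Name) (vs : List Val) (P : PProc) : PProc :=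
  (zs.zip vs).foldl (fun acc p => acc.psubst p.2 p.1) P

end PProc

inductive PSC : PProc → PProc → Prop where
  | refl (P) : PSC P P
  | symm : PSC P Q → PSC Q P
  | trans : PSC P Q → PSC Q R → PSC P R
  | parComm (P Q) : PSC (.par P Q) (.par Q P)
  | parAssoc (P Q R) : PSC (.par (.par P Q) R) (.par P (.par Q R))
  | parNil (P) : PSC (.par P .nil) P
  | resPar (x : Name) (P Q) : x ∉ Q.fn → PSC (.par (.res x P) Q) (.res x (.par P Q))
  | resNil (x) : PSC (.res x .nil) .nil
  | resComm (x y P) : PSC (.res x (.res y P)) (.res y (.res x P))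
  | parCong : PSC P P' → PSC Q Q' → PSC (.par P Q) (.par P' Q')
  | resCong (x) : PSC P Q → PSC (.res x P) (.res x Q)

inductive PRed : PProc → PProc → Prop where
  | com (x : Name) (vs : List Val) (zs : List Name) (P Q) :
      vs.length = zs.length →
      PRed (.par (.output x vs P) (.input x zs Q)) (.par P (PProc.psubstList zs vs Q))
  | case (j : Label) (v : Val) (I : Finset Label) (xs : Label → Name) (Ps : Label → PProc) :
      j ∈ I →
      PRed (.pcase (.variant j v) I xs Ps) ((Ps j).psubst v (xs j))
  | par : PRed P Q → PRed (.par P R) (.par Q R)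
  | res (x) : PRed P Q → PRed (.res x P) (.res x Q)
  | str : PSC P P' → PRed P' Q' → PSC Q' Q → PRed P Q

/-! ## Usages and usage types (Kobayashi) -/

inductive Usage : Type where
  | empty : Usage
  | inp : ℕ → ℕ → Usage → Usage      -- ?ᵒ_κ.U
  | out : ℕ → ℕ → Usage → Usage      -- !ᵒ_κ.U
  | par : Usage → Usage → Usage

namespace Usage

/-- Structural congruence on usages. -/
inductive UCong : Usage → Usage → Prop where
  | refl (U) : UCong U U
  | symm : UCong U V → UCong V U
  | trans : UCong U V → UCong V W → UCong U W
  | comm (U V) : UCong (.par U V) (.par V U)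
  | assoc (U V W) : UCong (.par (.par U V) W) (.par U (.par V W))
  | unit (U) : UCong (.par U .empty) U
  | parCong : UCong U U' → UCong V V' → UCong (.par U V) (.par U' V')

/-- Usage reduction: a matched input/output pair is consumed. -/
inductive URed : Usage → Usage → Prop where
  | comm (o κ o' κ' : ℕ) (U₁ U₂) :
      URed (.par (.inp o κ U₁) (.out o' κ' U₂)) (.par U₁ U₂)
  | parL : URed U U' → URed (.par U V) (.par U' V)
  | str : UCong U U₁ → URed U₁ U₂ → UCong U₂ U' → URed U U'

/-- Input obligation level. -/
noncomputable def obIn : Usage → ℕ∞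
  | .empty => ⊤
  | .inp o _ _ => (o : ℕ∞)
  | .out _ _ _ => ⊤
  | .par U V => min U.obIn V.obIn

/-- Output obligation level. -/
noncomputable def obOut : Usage → ℕ∞
  | .empty => ⊤
  | .inp _ _ _ => ⊤
  | .out o _ _ => (o : ℕ∞)
  | .par U V => min U.obOut V.obOut

/-- Input capability level. -/
noncomputable def capIn : Usage → ℕ∞
  | .empty => ⊤
  | .inp _ κ _ => (κ : ℕ∞)
  | .out _ _ _ => ⊤
  | .par U V => min U.capIn V.capIn

/-- Output capability level. -/
noncomputable def capOut : Usage → ℕ∞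
  | .empty => ⊤
  | .inp _ _ _ => ⊤
  | .out _ κ _ => (κ : ℕ∞)
  | .par U V => min U.capOut V.capOut

/-- con(U): each capability is matched by a co-obligation of lower or equal level. -/
def con (U : Usage) : Prop := U.obOut ≤ U.capIn ∧ U.obIn ≤ U.capOut

/-- Reliability of a usage. -/
def rel (U : Usage) : Prop := ∀ U', Relation.ReflTransGen URed U U' → con U'

/-- Lifting the obligation levels of the topmost actions up to `t`. -/
def lift (t : ℕ) : Usage → Usage
  | .empty => .empty
  | .inp o κ U => .inp (max o t) κ U
  | .out o κ U => .out (max o t) κ U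
  | .par U V => .par (U.lift t) (V.lift t)

/-- A usage offering no behaviour at all. -/
def noUse : Usage → Prop
  | .empty => True
  | .par U V => U.noUse ∧ V.noUse
  | _ => False

end Usage

inductive UType : Type where
  | chan : Usage → List UType → UType            -- U[T̃]
  | variant : Finset Label → (Label → UType) → UType  -- ⟨l_i : T_i⟩

/-- Composition of usage types: (U₁|U₂)[T̃] from U₁[T̃] and U₂[T̃];
equal variant types compose to themselves. -/
inductive CompT : UType → UType → UType → Prop where
  | chan (U₁ U₂ : Usage) (Ts : List UType) :
      CompT (.chan U₁ Ts) (.chan U₂ Ts) (.chan (.par U₁ U₂) Ts)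
  | variant (I : Finset Label) (Ts : Label → UType) :
      CompT (.variant I Ts) (.variant I Ts) (.variant I Ts)

def UType.lift (t : ℕ) : UType → UType
  | .chan U Ts => .chan (U.lift t) Ts
  | .variant I Ts => .variant I Ts

abbrev UCtx := Name → Option UType

def UCtx.update (Γ : UCtx) (x : Name) (T : Option UType) : UCtx :=
  fun y => if y = x then T else Γ y

def UCtx.empty : UCtx := fun _ => none

/-- Context composition Γ = Γ₁ | Γ₂. -/
def CompC (Γ₁ Γ₂ Γ : UCtx) : Prop :=
  ∀ x, (Γ₁ x = none ∧ Γ₂ x = none ∧ Γ x = none) ∨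
       (∃ T, Γ₁ x = some T ∧ Γ₂ x = none ∧ Γ x = some T) ∨
       (∃ T, Γ₁ x = none ∧ Γ₂ x = some T ∧ Γ x = some T) ∨
       (∃ T₁ T₂ T, Γ₁ x = some T₁ ∧ Γ₂ x = some T₂ ∧ CompT T₁ T₂ T ∧ Γ x = some T)

def UCtx.lift (t : ℕ) (Γ : UCtx) : UCtx := fun x => (Γ x).map (UType.lift t)

/-- The usage of `x` in Γ (∅ if `x` is not a channel of Γ). -/
def UCtx.usageAt (Γ : UCtx) (x : Name) : Usage :=
  match Γ x with
  | some (.chan U _) => U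
  | _ => .empty

/-- The carried types of `x` in Γ, if declared, agree with `Ts`. -/
def UCtx.carriesOK (Γ : UCtx) (x : Name) (Ts : List UType) : Prop :=
  ∀ U Ts', Γ x = some (.chan U Ts') → Ts' = Ts

/-- The context x:αᵒ_κ[T̃] ; Γ. -/
def seqCtx (x : Name) (isInp : Bool) (o κ : ℕ) (Ts : List UType) (Γ : UCtx) : UCtx :=
  fun y =>
    if y = x then some (.chan ((if isInp then Usage.inp else Usage.out) o κ (Γ.usageAt x)) Ts)
    else (Γ y).map (UType.lift (κ + 1))

def UCtx.extendList (Γ : UCtx) (zs : List Name) (Ts : List UType) : UCtx :=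
  (zs.zip Ts).foldl (fun Δ p => Δ.update p.1 (some p.2)) Γ

/-- The set of channels shared by two contexts. -/
def UCtx.shared (Γ₁ Γ₂ : UCtx) : Set Name := {x | Γ₁ x ≠ none ∧ Γ₂ x ≠ none}

/-- Typing of values. -/
inductive VTyped : UCtx → Val → UType → Prop where
  | ch (x : Name) (T : UType) :
      Γ x = some T → (∀ y, y ≠ x → Γ y = none) → VTyped Γ (.ch x) T
  | variant (j : Label) (I : Finset Label) (Ts : Label → UType) :
      j ∈ I → VTyped Γ v (Ts j) → VTyped Γ (.variant j v) (.variant I Ts)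

inductive VTypedList : UCtx → List Val → List UType → Prop where
  | nil : (∀ x, Γ x = none) → VTypedList Γ [] []
  | cons : CompC Γ₁ Γ₂ Γ → VTyped Γ₁ v T → VTypedList Γ₂ vs Ts →
      VTypedList Γ (v :: vs) (T :: Ts)

/-- Kobayashi's usage typing Γ ⊢ⁿ_KB P, with the explicit degree of sharing `n`
in the rule for parallel composition. -/
inductive KBTyped (n : ℕ) : UCtx → PProc → Prop where
  | nil : (∀ x T, Γ x = some T → ∃ U Ts, T = UType.chan U Ts ∧ U.noUse) →
      KBTyped n Γ .nil
  | input (x : Name) (zs : List Name) (o κ : ℕ) (Ts : List UType) :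
      zs.Nodup → x ∉ zs → (∀ z ∈ zs, Γ z = none) → zs.length = Ts.length →
      Γ.carriesOK x Ts →
      KBTyped n (Γ.extendList zs Ts) P →
      KBTyped n (seqCtx x true o κ Ts Γ) (.input x zs P)
  | output (x : Name) (vs : List Val) (o κ : ℕ) (Ts : List UType) :
      VTypedList Γ₁ vs Ts → KBTyped n Γ₂ P → CompC Γ₁ Γ₂ Γ →
      Γ.carriesOK x Ts →
      KBTyped n (seqCtx x false o κ Ts Γ) (.output x vs P)
  | par : CompC Γ₁ Γ₂ Γ →
      (UCtx.shared Γ₁ Γ₂).Finite → (UCtx.shared Γ₁ Γ₂).ncard ≤ n →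
      KBTyped n Γ₁ P → KBTyped n Γ₂ Q →
      KBTyped n Γ (.par P Q)
  | res (x : Name) (U : Usage) (Ts : List UType) :
      Γ x = none → Usage.rel U →
      KBTyped n (Γ.update x (some (.chan U Ts))) P →
      KBTyped n Γ (.res x P)
  | pcase (v : Val) (I : Finset Label) (xs : Label → Name) (Ps : Label → PProc)
      (Ts : Label → UType) :
      VTyped Γ₁ v (.variant I Ts) → CompC Γ₁ Γ₂ Γ →
      (∀ i ∈ I, Γ₂ (xs i) = none) →
      (∀ i ∈ I, KBTyped n (Γ₂.update (xs i) (some (Ts i))) (Ps i)) →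
      KBTyped n Γ (.pcase v I xs Ps)

/-- Reduction of typing contexts: the usage of one channel reduces (or nothing happens). -/
inductive UCtxRed : UCtx → UCtx → Prop where
  | refl (Γ) : UCtxRed Γ Γ
  | step (x : Name) (U U' : Usage) (Ts : List UType) :
      Γ x = some (.chan U Ts) → Usage.URed U U' →
      UCtxRed Γ (Γ.update x (some (.chan U' Ts)))

/-! ## Deadlock freedom for the standard π-calculus -/

def resSeqP : List Name → PProc → PProc
  | [], P => P
  | x :: L, P => .res x (resSeqP L P)

/-- A communication on channel `x` is enabled at top level. -/
def CommEnabledOn (x : Name) (P : PProc) : Prop :=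
  ∃ (L : List Name) (vs : List Val) (zs : List Name) (Q R S : PProc),
    PSC P (resSeqP L (.par (.output x vs Q) (.par (.input x zs R) S)))

/-- The step from `P` to `P'` fires a communication on channel `x`. -/
def CommStepOn (x : Name) (P P' : PProc) : Prop :=
  ∃ (L : List Name) (vs : List Val) (zs : List Name) (Q R S : PProc),
    PSC P (resSeqP L (.par (.output x vs Q) (.par (.input x zs R) S))) ∧
    PSC P' (resSeqP L (.par Q (.par (PProc.psubstList zs vs R) S)))

/-- Maximal (possibly terminating, then stuttering) reduction sequences. -/
def PMaxSeq (s : ℕ → PProc) : Prop :=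
  ∀ i, PRed (s i) (s (i + 1)) ∨ (s (i + 1) = s i ∧ ∀ Q, ¬ PRed (s i) Q)

/-- Fairness: a communication that stays enabled forever is eventually performed. -/
def PFairSeq (s : ℕ → PProc) : Prop :=
  ∀ i x, (∀ j, i ≤ j → CommEnabledOn x (s j)) → ∃ j, i ≤ j ∧ CommStepOn x (s j) (s (j + 1))

/-- Deadlock freedom for the standard π-calculus (Kobayashi-style): every active
output or input prefix is eventually consumed, along any fair maximal reduction
sequence. -/
def PDeadlockFree (P₀ : PProc) : Prop :=
  ∀ s : ℕ → PProc, s 0 = P₀ → PMaxSeq s → PFairSeq s →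
    (∀ i (L : List Name) (x : Name) (vs : List Val) (Q R : PProc),
      PSC (s i) (resSeqP L (.par (.output x vs Q) R)) →
      ∃ k, i ≤ k ∧ ∃ (zs : List Name) (R₁ R₂ : PProc),
        PSC (s k) (resSeqP L (.par (.output x vs Q) (.par (.input x zs R₁) R₂))) ∧
        PSC (s (k + 1)) (resSeqP L (.par Q (.par (PProc.psubstList zs vs R₁) R₂)))) ∧
    (∀ i (L : List Name) (x : Name) (zs : List Name) (Q R : PProc),
      PSC (s i) (resSeqP L (.par (.input x zs Q) R)) →
      ∃ k, i ≤ k ∧ ∃ (vs : List Val) (R₁ R₂ : PProc),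
        PSC (s k) (resSeqP L (.par (.input x zs Q) (.par (.output x vs R₁) R₂))) ∧
        PSC (s (k + 1)) (resSeqP L (.par (PProc.psubstList zs vs Q) (.par R₁ R₂))))

end Paper

namespace Paper

/-! ## Deadlock freedom for the session π-calculus -/

/-- A session communication on the endpoint pair (x,y) is enabled. -/
def SCommEnabled (x y : Name) (P : SProc) : Prop :=
  (∃ (L : List (Name × Name)) (v z : Name) (Q R S : SProc),
    SC P (resSeq L (.par (.output x v Q) (.par (.input y z R) S))) ∧ (x, y) ∈ L) ∨
  (∃ (L : List (Name × Name)) (j : Label) (I : Finset Label) (Q S : SProc)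
     (Rs : Label → SProc),
    j ∈ I ∧ SC P (resSeq L (.par (.select x j Q) (.par (.branch y I Rs) S))) ∧ (x, y) ∈ L)

/-- The step from `P` to `P'` fires a session communication on (x,y). -/
def SCommStep (x y : Name) (P P' : SProc) : Prop :=
  (∃ (L : List (Name × Name)) (v z : Name) (Q R S : SProc),
    SC P (resSeq L (.par (.output x v Q) (.par (.input y z R) S))) ∧ (x, y) ∈ L ∧
    SC P' (resSeq L (.par Q (.par (R.subst v z) S)))) ∨
  (∃ (L : List (Name × Name)) (j : Label) (I : Finset Label) (Q S : SProc)
     (Rs : Label → SProc),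
    j ∈ I ∧ SC P (resSeq L (.par (.select x j Q) (.par (.branch y I Rs) S))) ∧ (x, y) ∈ L ∧
    SC P' (resSeq L (.par Q (.par (Rs j) S))))

def SMaxSeq (s : ℕ → SProc) : Prop :=
  ∀ i, SRed (s i) (s (i + 1)) ∨ (s (i + 1) = s i ∧ ∀ Q, ¬ SRed (s i) Q)

def SFairSeq (s : ℕ → SProc) : Prop :=
  ∀ i x y, (∀ j, i ≤ j → SCommEnabled x y (s j)) →
    ∃ j, i ≤ j ∧ SCommStep x y (s j) (s (j + 1))

/-- Deadlock freedom for the session π-calculus: every active output prefix and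
every active selection prefix is eventually consumed along any fair maximal
reduction sequence (the input/branching cases being symmetric). -/
def SDeadlockFree (P₀ : SProc) : Prop :=
  ∀ s : ℕ → SProc, s 0 = P₀ → SMaxSeq s → SFairSeq s →
    (∀ i (L : List (Name × Name)) (x v : Name) (Q R : SProc),
      SC (s i) (resSeq L (.par (.output x v Q) R)) →
      ∃ k, i ≤ k ∧ ∃ (L' : List (Name × Name)) (y z : Name) (R₁ R₂ : SProc),
        SC (s k) (resSeq L' (.par (.output x v Q) (.par (.input y z R₁) R₂))) ∧
        SC (s (k + 1)) (resSeq L' (.par Q (.par (R₁.subst v z) R₂)))) ∧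
    (∀ i (L : List (Name × Name)) (x : Name) (j : Label) (Q R : SProc),
      SC (s i) (resSeq L (.par (.select x j Q) R)) →
      ∃ k, i ≤ k ∧ ∃ (L' : List (Name × Name)) (y : Name) (I : Finset Label)
        (Rs : Label → SProc) (S : SProc),
        SC (s k) (resSeq L' (.par (.select x j Q) (.par (.branch y (insert j I) Rs) S))) ∧
        SC (s (k + 1)) (resSeq L' (.par Q (.par (Rs j) S))))

/-! ## Continuation-passing encoding of session processes into π-processes -/

/-- Updating the renaming function of the encoding: f, x ↦ c. -/
def fupd (f : Name → Name) (x c : Name) : Name → Name :=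
  fun y => if y = x then c else f y

/-- The continuation-passing style encoding ⟦·⟧_f of session processes into
standard π-calculus processes (Dardha et al.), as a relation (the fresh
continuation names are chosen nondeterministically). -/
inductive Enc : (Name → Name) → SProc → PProc → Prop where
  | nil (f) : Enc f .nil .nil
  | output (f) (x v c : Name) (P : SProc) (Q : PProc) :
      c ∉ f '' (SProc.fn (.output x v P)) → c ∉ SProc.fn (.output x v P) →
      Enc (fupd f x c) P Q →
      Enc f (.output x v P) (.res c (.output (f x) [.ch v, .ch c] Q))
  | input (f) (x y c : Name) (P : SProc) (Q : PProc) :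
      c ∉ f '' (SProc.fn (.input x y P)) → c ∉ SProc.fn (.input x y P) → c ≠ y →
      Enc (fupd f x c) P Q →
      Enc f (.input x y P) (.input (f x) [y, c] Q)
  | select (f) (x c : Name) (j : Label) (P : SProc) (Q : PProc) :
      c ∉ f '' (SProc.fn (.select x j P)) → c ∉ SProc.fn (.select x j P) →
      Enc (fupd f x c) P Q →
      Enc f (.select x j P) (.res c (.output (f x) [.variant j (.ch c)] Q))
  | branch (f) (x y c : Name) (I : Finset Label) (Ps : Label → SProc)
      (Qs : Label → PProc) :
      c ∉ f '' (SProc.fn (.branch x I Ps)) → c ∉ SProc.fn (.branch x I Ps) →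
      y ∉ f '' (SProc.fn (.branch x I Ps)) → y ≠ c →
      (∀ i ∈ I, Enc (fupd f x c) (Ps i) (Qs i)) →
      Enc f (.branch x I Ps) (.input (f x) [y] (.pcase (.ch y) I (fun _ => c) Qs))
  | res (f) (x y c : Name) (P : SProc) (Q : PProc) :
      c ∉ f '' (SProc.fn (.res x y P)) → c ∉ SProc.fn (.res x y P) →
      Enc (fupd (fupd f x c) y c) P Q →
      Enc f (.res x y P) (.res c Q)
  | par (f) (P₁ P₂ : SProc) (Q₁ Q₂ : PProc) :
      Enc f P₁ Q₁ → Enc f P₂ Q₂ →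
      Enc f (.par P₁ P₂) (.par Q₁ Q₂)

/-! ## Encoding of session types into usage types -/

mutual
/-- The encoding ⟦·⟧_su of session types into usage types (Dardha et al.),
with canonical obligation/capability annotations. -/
def encSU : SType → UType
  | .endT => .chan .empty []
  | .recv T S => .chan (.inp 0 0 .empty) [encSU T, encSU S]
  | .send T S => .chan (.out 0 0 .empty) [encSU T, encSUd S]
  | .branchT I S => .chan (.inp 0 0 .empty) [.variant I (fun i => encSU (S i))]
  | .selectT I S => .chan (.out 0 0 .empty) [.variant I (fun i => encSUd (S i))]

/-- `encSUd T` is ⟦T̄⟧_su, the encoding of the dual of `T`. -/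
def encSUd : SType → UType
  | .endT => .chan .empty []
  | .recv T S => .chan (.out 0 0 .empty) [encSU T, encSU S]
  | .send T S => .chan (.inp 0 0 .empty) [encSU T, encSUd S]
  | .branchT I S => .chan (.out 0 0 .empty) [.variant I (fun i => encSU (S i))]
  | .selectT I S => .chan (.inp 0 0 .empty) [.variant I (fun i => encSUd (S i))]
end

/-- Duality on usages: exchange ? and !. -/
def Usage.dualU : Usage → Usage
  | .empty => .empty
  | .inp o κ U => .out o κ U.dualU
  | .out o κ U => .inp o κ U.dualU
  | .par U V => .par U.dualU V.dualU

/-- Duality on usage types: exchange ? and ! in the top-level usage,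
leaving the carried types unchanged. -/
def UType.dual : UType → UType
  | .chan U Ts => .chan U.dualU Ts
  | .variant I Ts => .variant I Ts

/-- The top-level usage of a usage type. -/
def UType.topUsage : UType → Usage
  | .chan U _ => U
  | .variant _ _ => .empty

/-- Encoding ⟦Γ⟧_f of a session typing context into a usage typing context. -/
def EncCtx (f : Name → Name) (Γ : Ctx) (Δ : UCtx) : Prop :=
  (∀ x T, Γ x = some T → Δ (f x) = some (encSU T)) ∧
  (∀ y, (∀ x, Γ x ≠ none → f x ≠ y) → Δ y = none)

/-- The class K_n of deadlock-free session processes: session-typable processes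
whose encoding is typable in Kobayashi's system with degree of sharing n. -/
def Koba (n : ℕ) (P : SProc) : Prop :=
  ∃ (Γ : Ctx) (f : Name → Name) (Q : PProc) (Δ : UCtx),
    STyped Γ P ∧ Enc f P Q ∧ EncCtx f Γ Δ ∧ KBTyped n Δ Q

end Paper

namespace Paper

/-!
Both the obligation/capability levels and the reductions of a usage are governed by the multiset
of its top-level prefixes, which structural congruence preserves. The encodings of `T` and `T̄`
carry dual top-level usages, each `∅`, `?⁰₀` or `!⁰₀` with inert continuation: so the composite
is either inert or a single matched pair `?⁰₀ | !⁰₀`, which is consistent and can only reduce to an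
inert usage.
-/

namespace Usage

def leaves : Usage → Multiset Usage
  | .empty => 0
  | .inp o κ U => {.inp o κ U}
  | .out o κ U => {.out o κ U}
  | .par U V => leaves U + leaves V

theorem UCong.leaves_eq {U V : Usage} (h : UCong U V) : leaves U = leaves V := by
  induction h with
  | refl => rfl
  | symm _ ih => exact ih.symm
  | trans _ _ ih₁ ih₂ => exact ih₁.trans ih₂
  | comm U V => exact add_comm _ _
  | assoc U V W => exact add_assoc _ _ _
  | unit U => exact add_zero _
  | parCong _ _ ih₁ ih₂ => simp only [leaves, ih₁, ih₂]

theorem inf_map_leaves {φ : Usage → ℕ∞} (h_empty : φ .empty = ⊤)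
    (h_par : ∀ U V, φ (.par U V) = min (φ U) (φ V)) (U : Usage) :
    ((leaves U).map φ).inf = φ U := by
  induction U with
  | empty => simp [leaves, h_empty]
  | inp | out => simp [leaves]
  | par U V ihU ihV => simp [leaves, Multiset.inf_add, ihU, ihV, h_par]

theorem con_iff_of_leaves_eq {U V : Usage} (h : leaves U = leaves V) : con U ↔ con V := by
  have key : ∀ φ : Usage → ℕ∞, φ .empty = ⊤ → (∀ U V, φ (.par U V) = min (φ U) (φ V)) →
      φ U = φ V := fun φ h_empty h_par => by
    rw [← inf_map_leaves h_empty h_par U, ← inf_map_leaves h_empty h_par V, h]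
  rw [con, con, key obIn rfl fun _ _ => rfl, key obOut rfl fun _ _ => rfl,
    key capIn rfl fun _ _ => rfl, key capOut rfl fun _ _ => rfl]

theorem URed.exists_leaves_eq {U V : Usage} (h : URed U V) :
    ∃ o κ U₁ o' κ' U₂ M,
      leaves U = .inp o κ U₁ ::ₘ .out o' κ' U₂ ::ₘ M ∧ leaves V = leaves U₁ + leaves U₂ + M := by
  induction h with
  | comm o κ o' κ' U₁ U₂ => exact ⟨o, κ, U₁, o', κ', U₂, 0, rfl, (add_zero _).symm⟩
  | @parL U U' W _ ih =>
    obtain ⟨o, κ, U₁, o', κ', U₂, M, hU, hU'⟩ := ih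
    refine ⟨o, κ, U₁, o', κ', U₂, M + leaves W, ?_, ?_⟩
    · simp only [leaves, hU, Multiset.cons_add]
    · simp only [leaves, hU', add_assoc]
  | str hU _ hV ih =>
    obtain ⟨o, κ, U₁, o', κ', U₂, M, h₁, h₂⟩ := ih
    exact ⟨o, κ, U₁, o', κ', U₂, M, hU.leaves_eq.trans h₁, hV.leaves_eq.symm.trans h₂⟩

theorem rel_iff {U : Usage} : rel U ↔ con U ∧ ∀ V, URed U V → rel V := by
  constructor
  · intro h
    exact ⟨h U .refl, fun V hUV W hVW => h W (.head hUV hVW)⟩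
  · rintro ⟨hU, hstep⟩ W hUW
    rcases Relation.ReflTransGen.cases_head hUW with rfl | ⟨V, hUV, hVW⟩
    · exact hU
    · exact hstep V hUV W hVW

theorem rel_of_leaves_eq_zero {U : Usage} (h : leaves U = 0) : rel U := by
  have hcon : con U :=
    (con_iff_of_leaves_eq (V := .empty) h).2 (by simp [con, obIn, obOut, capIn, capOut])
  refine rel_iff.2 ⟨hcon, fun V hUV => ?_⟩
  obtain ⟨_, _, _, _, _, _, _, hU, -⟩ := hUV.exists_leaves_eq
  exact absurd (hU.symm.trans h) Multiset.cons_ne_zero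

theorem URed.leaves_eq_zero_of_leaves_eq_pair {U V : Usage} {o κ o' κ' : ℕ}
    (h : leaves U = {.inp o κ .empty, .out o' κ' .empty}) (hUV : URed U V) : leaves V = 0 := by
  obtain ⟨_, _, U₁, _, _, U₂, M, hU, hV⟩ := hUV.exists_leaves_eq
  rw [h] at hU
  rcases Multiset.cons_eq_cons.1 hU with ⟨hinp, hrest⟩ | ⟨-, cs, hsingle, -⟩
  · obtain ⟨hout, rfl⟩ := (Multiset.singleton_eq_cons_iff _).1 hrest
    obtain ⟨-, -, rfl⟩ := Usage.inp.inj hinp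
    obtain ⟨-, -, rfl⟩ := Usage.out.inj hout
    simpa [leaves] using hV
  · exact absurd ((Multiset.singleton_eq_cons_iff _).1 hsingle).1 Usage.noConfusion

theorem rel_of_leaves_eq_pair {U : Usage} {o κ o' κ' : ℕ}
    (h : leaves U = {.inp o κ .empty, .out o' κ' .empty}) (hout : o' ≤ κ) (hinp : o ≤ κ') :
    rel U := by
  have hcon : con U := (con_iff_of_leaves_eq (V := .par (.inp o κ .empty) (.out o' κ' .empty)) h).2
    (by simp [con, obIn, obOut, capIn, capOut, hout, hinp])
  exact rel_iff.2
    ⟨hcon, fun V hUV => rel_of_leaves_eq_zero (hUV.leaves_eq_zero_of_leaves_eq_pair h)⟩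

end Usage

/-- for every session type T, the parallel composition of the
usages of ⟦T⟧_su and ⟦T̄⟧_su is reliable. -/
theorem enc_dual_reliable (T : SType) :
    Usage.rel (.par (encSU T).topUsage (encSU T.dual).topUsage) := by
  cases T with
  | endT => exact Usage.rel_of_leaves_eq_zero rfl
  | recv | branchT => exact Usage.rel_of_leaves_eq_pair rfl le_rfl le_rfl
  | send | selectT =>
    exact Usage.rel_of_leaves_eq_pair (Multiset.pair_comm (Usage.out 0 0 .empty) _) le_rfl le_rfl

end Paper
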